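/- Let M be a loopless matroid of rank d on a finite ground set. Then the coefficient of t² in the Kazhdan–Lusztig polynomial P_M(t) equals w_{0,2} − W_{1,d−1} + W_{0,d−2} − W_{d−3,d−2} + W_{d−3,d−1}. -/

import Mathlib

open scoped Classical

/-- A matroid on a finite ground set, presented by its rank function
(normalized, monotone, submodular, with unit increase). -/
structure FinMatroid where
  E : Type
  fintypeE : Fintype E
  deceqE : DecidableEq E
  rk : Finset E → ℕ
  rk_empty : rk ∅ = 0
  rk_mono : ∀ ⦃S T : Finset E⦄, S ⊆ T → rk S ≤ rk T
  rk_submod : ∀ S T : Finset E, rk (S ∪ T) + rk (S ∩ T) ≤ rk S + rk T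
  rk_insert_le : ∀ (S : Finset E) (x : E), rk (insert x S) ≤ rk S + 1

attribute [instance] FinMatroid.fintypeE FinMatroid.deceqE

namespace FinMatroid

/-- The rank of the matroid: the rank of the full ground set. -/
noncomputable def rank (M : FinMatroid) : ℕ := M.rk Finset.univ

/-- A flat: a set such that adding any new element increases the rank. -/
def IsFlat (M : FinMatroid) (F : Finset M.E) : Prop :=
  ∀ x ∉ F, M.rk (insert x F) ≠ M.rk F

/-- The (finite) collection of flats of `M`. -/
noncomputable def flats (M : FinMatroid) : Finset (Finset M.E) :=
  Finset.univ.filter M.IsFlat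

/-- A matroid is loopless if every singleton has rank 1. -/
def Loopless (M : FinMatroid) : Prop := ∀ x : M.E, M.rk {x} = 1

/-- The Möbius function of the lattice of flats of `M` (extended by the usual
recursion; `mu A B = 0` unless `A ⊆ B`). -/
noncomputable def mu (M : FinMatroid) (A B : Finset M.E) : ℤ :=
  if A = B then 1
  else -∑ G ∈ (M.flats.filter (fun G => A ⊆ G ∧ G ⊂ B)).attach,
        M.mu A G.1
termination_by B.card
decreasing_by
  exact Finset.card_lt_card (Finset.mem_filter.mp G.2).2.2

/-- The characteristic polynomial `χ_M(t) = ∑_{F flat} μ(∅,F) t^(rk M - rk F)`. -/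
noncomputable def charPoly (M : FinMatroid) : Polynomial ℤ :=
  ∑ F ∈ M.flats, Polynomial.C (M.mu ∅ F) * Polynomial.X ^ (M.rank - M.rk F)

/-- The localization `M_F`: the restriction of `M` to the set `F`. -/
noncomputable def localization (M : FinMatroid) (F : Finset M.E) : FinMatroid where
  E := {x : M.E // x ∈ F}
  fintypeE := inferInstance
  deceqE := inferInstance
  rk S := M.rk (S.map (Function.Embedding.subtype _))
  rk_empty := by simpa using M.rk_empty
  rk_mono := fun S T h => M.rk_mono (Finset.map_subset_map.mpr h)
  rk_submod := fun S T => by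
    try dsimp only
    rw [Finset.map_union, Finset.map_inter]
    exact M.rk_submod _ _
  rk_insert_le := fun S x => by
    try dsimp only
    rw [Finset.map_insert]
    exact M.rk_insert_le _ _

/-- The restriction `M^F` (the contraction of `M` by the flat `F`), a matroid on
the complement of `F`. -/
noncomputable def restrictionAt (M : FinMatroid) (F : Finset M.E) : FinMatroid where
  E := {x : M.E // x ∉ F}
  fintypeE := inferInstance
  deceqE := inferInstance
  rk S := M.rk (S.map (Function.Embedding.subtype _) ∪ F) - M.rk F
  rk_empty := by simp
  rk_mono := fun S T h =>
    Nat.sub_le_sub_right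
      (M.rk_mono (Finset.union_subset_union_left (Finset.map_subset_map.mpr h))) _
  rk_submod := fun S T => by
    try dsimp only
    set e := Function.Embedding.subtype (fun x : M.E => x ∉ F) with he
    have h1 : (S ∪ T).map e ∪ F = (S.map e ∪ F) ∪ (T.map e ∪ F) := by
      rw [Finset.map_union, Finset.union_union_distrib_right]
    have h2 : (S ∩ T).map e ∪ F = (S.map e ∪ F) ∩ (T.map e ∪ F) := by
      rw [Finset.map_inter, Finset.inter_union_distrib_right]
    have h3 := M.rk_submod (S.map e ∪ F) (T.map e ∪ F)
    have h4 : M.rk F ≤ M.rk (S.map e ∪ F) := M.rk_mono Finset.subset_union_right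
    have h5 : M.rk F ≤ M.rk (T.map e ∪ F) := M.rk_mono Finset.subset_union_right
    have h6 : M.rk F ≤ M.rk ((S ∩ T).map e ∪ F) := M.rk_mono Finset.subset_union_right
    have h7 : M.rk F ≤ M.rk ((S ∪ T).map e ∪ F) := M.rk_mono Finset.subset_union_right
    rw [h1] at h7 ⊢
    rw [h2] at h6 ⊢
    omega
  rk_insert_le := fun S x => by
    try dsimp only
    set e := Function.Embedding.subtype (fun x : M.E => x ∉ F) with he
    have h1 : (insert x S).map e ∪ F = insert (e x) (S.map e ∪ F) := by
      rw [Finset.map_insert, Finset.insert_union]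
    have h2 := M.rk_insert_le (S.map e ∪ F) (e x)
    have h3 : M.rk F ≤ M.rk (S.map e ∪ F) := M.rk_mono Finset.subset_union_right
    rw [h1]
    omega

end FinMatroid

namespace FinMatroid

/-- `P` is a Kazhdan–Lusztig family: it assigns to each loopless matroid a polynomial
satisfying the three defining conditions of the Kazhdan–Lusztig polynomial.
Condition (2), `deg P_M < rk M / 2`, is expressed by the vanishing of all coefficients
in degrees `i` with `2 i ≥ rk M`; condition (3), the Laurent-polynomial identity
`t^(rk M) P_M(t⁻¹) = ∑_F χ_{M_F}(t) P_{M^F}(t)`, is expressed via evaluation at every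
nonzero rational number. -/
def IsKLFamily (P : FinMatroid → Polynomial ℤ) : Prop :=
  (∀ M : FinMatroid, M.Loopless → M.rank = 0 → P M = 1) ∧
  (∀ M : FinMatroid, M.Loopless → 0 < M.rank →
      ∀ i : ℕ, M.rank ≤ 2 * i → (P M).coeff i = 0) ∧
  (∀ M : FinMatroid, M.Loopless → ∀ q : ℚ, q ≠ 0 →
      q ^ M.rank * Polynomial.aeval q⁻¹ (P M) =
        ∑ F ∈ M.flats,
          Polynomial.aeval q ((M.localization F).charPoly) *
            Polynomial.aeval q (P (M.restrictionAt F)))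

end FinMatroid

namespace FinMatroid

/-- Doubly indexed Whitney number of the second kind: the number of pairs of flats
`E ⊆ F` with `rk E = i` and `rk F = j` (indexed by integers, so that it vanishes for
negative indices). -/
noncomputable def W (M : FinMatroid) (i j : ℤ) : ℕ :=
  ((M.flats ×ˢ M.flats).filter
    (fun p => p.1 ⊆ p.2 ∧ (M.rk p.1 : ℤ) = i ∧ (M.rk p.2 : ℤ) = j)).card

/-- Doubly indexed Whitney number of the first kind: the sum of `μ(E,F)` over pairs of
flats with `rk E = i` and `rk F = j`. -/
noncomputable def w (M : FinMatroid) (i j : ℤ) : ℤ :=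
  ∑ p ∈ (M.flats ×ˢ M.flats).filter
      (fun p => (M.rk p.1 : ℤ) = i ∧ (M.rk p.2 : ℤ) = j),
    M.mu p.1 p.2

end FinMatroid

namespace FinMatroid

variable {M : FinMatroid}

lemma mem_flats {F : Finset M.E} : F ∈ M.flats ↔ M.IsFlat F := by
  simp [flats]

lemma rk_le_rank (M : FinMatroid) (S : Finset M.E) : M.rk S ≤ M.rank :=
  M.rk_mono (Finset.subset_univ S)

lemma univ_mem_flats (M : FinMatroid) : (Finset.univ : Finset M.E) ∈ M.flats :=
  mem_flats.mpr (fun x hx => absurd (Finset.mem_univ x) hx)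

lemma rk_univ (M : FinMatroid) : M.rk Finset.univ = M.rank := rfl

lemma loopless_eq_empty (hM : M.Loopless) {S : Finset M.E} (h : M.rk S = 0) : S = ∅ := by
  by_contra hne
  obtain ⟨x, hx⟩ := Finset.nonempty_iff_ne_empty.mpr hne
  have h1 : M.rk {x} ≤ M.rk S := M.rk_mono (Finset.singleton_subset_iff.mpr hx)
  rw [hM x, h] at h1; omega

lemma empty_mem_flats (hM : M.Loopless) : (∅ : Finset M.E) ∈ M.flats := by
  refine mem_flats.mpr (fun x _ => ?_)
  have : insert x (∅ : Finset M.E) = {x} := rfl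
  rw [this, hM x, M.rk_empty]
  omega

lemma subset_of_flat {E F : Finset M.E} (hE : M.IsFlat E) (hEF : E ⊆ F)
    (h : M.rk F ≤ M.rk E) : F ⊆ E := by
  intro x hx
  by_contra hxE
  have h1 := hE x hxE
  have h2 : M.rk (insert x E) ≤ M.rk F := M.rk_mono (Finset.insert_subset hx hEF)
  have h3 : M.rk E ≤ M.rk (insert x E) := M.rk_mono (Finset.subset_insert x E)
  omega

lemma flat_eq_of_subset {E F : Finset M.E} (hE : M.IsFlat E) (hEF : E ⊆ F)
    (h : M.rk F ≤ M.rk E) : E = F :=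
  Finset.Subset.antisymm hEF (subset_of_flat hE hEF h)

lemma flat_eq_univ {F : Finset M.E} (hF : M.IsFlat F) (h : M.rank ≤ M.rk F) :
    F = Finset.univ :=
  flat_eq_of_subset hF (Finset.subset_univ F) h

lemma mu_eq (M : FinMatroid) (A B : Finset M.E) :
    M.mu A B = if A = B then 1
      else -∑ G ∈ M.flats.filter (fun G => A ⊆ G ∧ G ⊂ B), M.mu A G := by
  rw [mu]
  split_ifs
  · rfl
  · rw [Finset.sum_attach]

lemma mu_self (M : FinMatroid) (A : Finset M.E) : M.mu A A = 1 := by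
  rw [mu_eq, if_pos rfl]

lemma mu_atom (hM : M.Loopless) {A : Finset M.E} (hA : M.IsFlat A) (h1 : M.rk A = 1) :
    M.mu ∅ A = -1 := by
  have hAne : (∅ : Finset M.E) ≠ A := by
    intro h; rw [← h, M.rk_empty] at h1; omega
  rw [mu_eq, if_neg hAne]
  have hset : M.flats.filter (fun G => ∅ ⊆ G ∧ G ⊂ A) = {∅} := by
    ext G
    simp only [Finset.mem_filter, Finset.mem_singleton, Finset.empty_subset, true_and]
    constructor
    · rintro ⟨hGf, hGA⟩
      have hle : M.rk G ≤ M.rk A := M.rk_mono hGA.subset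
      rcases Nat.lt_or_ge (M.rk G) 1 with h | h
      · exact loopless_eq_empty hM (by omega)
      · exact absurd (flat_eq_of_subset (mem_flats.mp hGf) hGA.subset (by omega)) hGA.ne
    · rintro rfl
      exact ⟨empty_mem_flats hM, Finset.empty_ssubset.mpr (Finset.nonempty_iff_ne_empty.mpr hAne.symm)⟩
  rw [hset, Finset.sum_singleton, mu_self]

end FinMatroid
namespace FinMatroid

variable {M : FinMatroid}

lemma charPoly_coeff (M : FinMatroid) (k : ℕ) :
    M.charPoly.coeff k = ∑ G ∈ M.flats.filter (fun G => M.rank - M.rk G = k), M.mu ∅ G := by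
  rw [charPoly, Polynomial.finset_sum_coeff, Finset.sum_filter]
  refine Finset.sum_congr rfl fun G _ => ?_
  rw [Polynomial.coeff_C_mul, Polynomial.coeff_X_pow]
  by_cases h : M.rank - M.rk G = k
  · rw [if_pos h, if_pos h.symm, mul_one]
  · rw [if_neg h, if_neg (fun hh => h hh.symm), mul_zero]

lemma charPoly_coeff_of_le (M : FinMatroid) {k : ℕ} (hk : k ≤ M.rank) :
    M.charPoly.coeff k = ∑ G ∈ M.flats.filter (fun G => M.rk G = M.rank - k), M.mu ∅ G := by
  rw [charPoly_coeff]
  refine Finset.sum_congr (Finset.filter_congr fun G hG => ?_) fun _ _ => rfl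
  have := M.rk_le_rank G
  constructor <;> intro h <;> omega

lemma charPoly_coeff_eq_zero (M : FinMatroid) {k : ℕ} (hk : M.rank < k) :
    M.charPoly.coeff k = 0 := by
  rw [charPoly_coeff]
  rw [Finset.filter_false_of_mem fun G _ => by omega, Finset.sum_empty]

lemma charPoly_coeff_rank (hM : M.Loopless) : M.charPoly.coeff M.rank = 1 := by
  rw [charPoly_coeff_of_le M (le_refl _)]
  have hset : M.flats.filter (fun G => M.rk G = M.rank - M.rank) = {∅} := by
    ext G
    simp only [Finset.mem_filter, Finset.mem_singleton, Nat.sub_self]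
    constructor
    · rintro ⟨_, h⟩; exact loopless_eq_empty hM h
    · rintro rfl; exact ⟨empty_mem_flats hM, M.rk_empty⟩
  rw [hset, Finset.sum_singleton, mu_self]

lemma charPoly_coeff_pred (hM : M.Loopless) (h : 1 ≤ M.rank) :
    M.charPoly.coeff (M.rank - 1) =
      -((M.flats.filter (fun G => M.rk G = 1)).card : ℤ) := by
  rw [charPoly_coeff_of_le M (by omega)]
  have hset : M.flats.filter (fun G => M.rk G = M.rank - (M.rank - 1)) =
      M.flats.filter (fun G => M.rk G = 1) := by
    refine Finset.filter_congr fun G _ => ?_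
    constructor <;> intro hh <;> omega
  rw [hset]
  rw [Finset.sum_congr rfl fun G hG => mu_atom hM (mem_flats.mp (Finset.mem_filter.mp hG).1)
    (Finset.mem_filter.mp hG).2]
  rw [Finset.sum_const, nsmul_eq_mul, mul_neg_one]

end FinMatroid
namespace FinMatroid

variable {M : FinMatroid} {F : Finset M.E}

lemma loc_rk (S : Finset {x : M.E // x ∈ F}) :
    (M.localization F).rk S = M.rk (S.map (Function.Embedding.subtype _)) := rfl

lemma univ_map_subtype (F : Finset M.E) :
    (Finset.univ : Finset {x : M.E // x ∈ F}).map (Function.Embedding.subtype _) = F := by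
  ext x
  simp [Finset.mem_map]

lemma loc_rank (M : FinMatroid) (F : Finset M.E) : (M.localization F).rank = M.rk F := by
  show M.rk _ = M.rk F
  erw [univ_map_subtype]

lemma loc_loopless (hM : M.Loopless) (F : Finset M.E) : (M.localization F).Loopless := by
  intro x
  show M.rk (Finset.map _ {x}) = 1
  erw [Finset.map_singleton]
  exact hM _

lemma map_subtype_subset (S : Finset {x : M.E // x ∈ F}) :
    S.map (Function.Embedding.subtype _) ⊆ F := by
  intro x hx
  obtain ⟨a, _, rfl⟩ := Finset.mem_map.mp hx
  exact a.2

lemma loc_isFlat_iff (hF : M.IsFlat F) (S : Finset {x : M.E // x ∈ F}) :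
    (M.localization F).IsFlat S ↔ M.IsFlat (S.map (Function.Embedding.subtype _)) := by
  set e : {x : M.E // x ∈ F} ↪ M.E := Function.Embedding.subtype _ with he
  have hSF : S.map e ⊆ F := map_subtype_subset S
  constructor
  · intro h x hx
    by_cases hxF : x ∈ F
    · have hxS : (⟨x, hxF⟩ : {x : M.E // x ∈ F}) ∉ S := by
        intro hc
        exact hx (Finset.mem_map.mpr ⟨⟨x, hxF⟩, hc, rfl⟩)
      have := h ⟨x, hxF⟩ hxS
      change M.rk ((insert ⟨x, hxF⟩ S).map e) ≠ M.rk (S.map e) at this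
      rw [Finset.map_insert] at this
      exact this
    · have h1 : insert x (S.map e) ∪ F = insert x F := by
        rw [Finset.insert_union, Finset.union_eq_right.mpr hSF]
      have h2 : insert x (S.map e) ∩ F = S.map e := by
        rw [Finset.insert_inter_of_notMem hxF, Finset.inter_eq_left.mpr hSF]
      have h3 := M.rk_submod (insert x (S.map e)) F
      rw [h1, h2] at h3
      have h4 := hF x hxF
      have h5 : M.rk F ≤ M.rk (insert x F) := M.rk_mono (Finset.subset_insert x F)
      have h6 : M.rk (S.map e) ≤ M.rk (insert x (S.map e)) :=
        M.rk_mono (Finset.subset_insert _ _)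
      omega
  · intro h x hx
    show M.rk ((insert x S).map e) ≠ M.rk (S.map e)
    erw [Finset.map_insert]
    refine h (e x) ?_
    intro hc
    obtain ⟨a, ha, hax⟩ := Finset.mem_map.mp hc
    exact hx ((e.injective hax) ▸ ha)

lemma loc_flats_image (hF : M.IsFlat F) :
    (M.localization F).flats.image (fun S => S.map (Function.Embedding.subtype _)) =
      M.flats.filter (fun G => G ⊆ F) := by
  ext G
  simp only [Finset.mem_image, Finset.mem_filter, mem_flats]
  constructor
  · rintro ⟨S, hS, rfl⟩
    exact ⟨(loc_isFlat_iff hF S).mp hS, map_subtype_subset S⟩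
  · rintro ⟨hGf, hGF⟩
    refine ⟨G.subtype _, ?_, ?_⟩
    · rw [loc_isFlat_iff hF, Finset.subtype_map, Finset.filter_true_of_mem fun x hx => hGF hx]
      exact hGf
    · rw [Finset.subtype_map, Finset.filter_true_of_mem fun x hx => hGF hx]

lemma loc_sum {β : Type*} [AddCommMonoid β] (hF : M.IsFlat F) (f : Finset M.E → β) :
    ∑ S ∈ (M.localization F).flats, f (S.map (Function.Embedding.subtype _)) =
      ∑ G ∈ M.flats.filter (fun G => G ⊆ F), f G := by
  rw [← loc_flats_image hF, Finset.sum_image]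
  intro x _ y _ h
  exact Finset.map_injective _ h

lemma loc_mu (hF : M.IsFlat F) (B A : Finset {x : M.E // x ∈ F}) :
    (M.localization F).mu A B =
      M.mu (A.map (Function.Embedding.subtype _)) (B.map (Function.Embedding.subtype _)) := by
  induction B using Finset.strongInduction generalizing A with
  | _ B ih =>
    rw [mu_eq (M.localization F) A B, mu_eq]
    by_cases hAB : A = B
    · erw [if_pos hAB, if_pos (by rw [hAB])]
    · erw [if_neg hAB,
        if_neg (fun h => hAB (Finset.map_injective (Function.Embedding.subtype _) h))]
      congr 1
      have step1 : ∑ G ∈ (M.localization F).flats.filter (fun G => A ⊆ G ∧ G ⊂ B),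
          (M.localization F).mu A G
          = ∑ S ∈ (M.localization F).flats,
              (if A.map (Function.Embedding.subtype _) ⊆ S.map (Function.Embedding.subtype _) ∧
                  S.map (Function.Embedding.subtype _) ⊂ B.map (Function.Embedding.subtype _) then
                M.mu (A.map (Function.Embedding.subtype _)) (S.map (Function.Embedding.subtype _))
              else 0) := by
        erw [Finset.sum_filter]
        refine Finset.sum_congr rfl fun S _ => ?_
        have hcond : (A ⊆ S ∧ S ⊂ B) ↔ (A.map (Function.Embedding.subtype _) ⊆
            S.map (Function.Embedding.subtype _) ∧ S.map (Function.Embedding.subtype _) ⊂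
            B.map (Function.Embedding.subtype _)) := by
          rw [Finset.map_subset_map, Finset.map_ssubset_map]
        by_cases hc : A ⊆ S ∧ S ⊂ B
        · rw [if_pos hc, if_pos (hcond.mp hc), ih S hc.2 A]
        · rw [if_neg hc, if_neg (fun h => hc (hcond.mpr h))]
      refine step1.trans ?_
      refine (loc_sum hF (fun G =>
        if A.map (Function.Embedding.subtype _) ⊆ G ∧ G ⊂ B.map (Function.Embedding.subtype _)
        then M.mu (A.map (Function.Embedding.subtype _)) G else 0)).trans ?_
      have hfil : ∑ G ∈ M.flats.filter (fun G => G ⊆ F),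
          (if A.map (Function.Embedding.subtype _) ⊆ G ∧
              G ⊂ B.map (Function.Embedding.subtype _) then
            M.mu (A.map (Function.Embedding.subtype _)) G else 0)
          = ∑ G ∈ M.flats,
            (if A.map (Function.Embedding.subtype _) ⊆ G ∧
                G ⊂ B.map (Function.Embedding.subtype _) then
              M.mu (A.map (Function.Embedding.subtype _)) G else 0) := by
        refine Finset.sum_filter_of_ne fun G _ hne => ?_
        by_cases hc : A.map (Function.Embedding.subtype _) ⊆ G ∧
            G ⊂ B.map (Function.Embedding.subtype _)
        · exact hc.2.subset.trans (map_subtype_subset B)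
        · rw [if_neg hc] at hne; exact absurd rfl hne
      refine hfil.trans ?_
      exact (Finset.sum_filter _ _).symm

end FinMatroid
namespace FinMatroid

variable {M : FinMatroid} {F : Finset M.E}

lemma loc_count (hF : M.IsFlat F) (n : ℕ) :
    ((M.localization F).flats.filter (fun S => (M.localization F).rk S = n)).card =
      (M.flats.filter (fun G => G ⊆ F ∧ M.rk G = n)).card := by
  have h1 : ((M.localization F).flats.filter (fun S => (M.localization F).rk S = n)).card
      = ∑ S ∈ (M.localization F).flats,
          (if M.rk (S.map (Function.Embedding.subtype _)) = n then 1 else 0) := by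
    rw [Finset.card_filter]
    exact Finset.sum_congr rfl fun S _ => rfl
  rw [h1, loc_sum hF (fun G => if M.rk G = n then 1 else 0), Finset.card_filter,
    Finset.sum_filter]
  refine Finset.sum_congr rfl fun G _ => ?_
  by_cases h : G ⊆ F
  · by_cases h2 : M.rk G = n <;> simp [h, h2]
  · simp [h]

lemma res_rk (S : Finset {x : M.E // x ∉ F}) :
    (M.restrictionAt F).rk S =
      M.rk (S.map (Function.Embedding.subtype _) ∪ F) - M.rk F := rfl

lemma res_map_union_univ (F : Finset M.E) :
    (Finset.univ : Finset {x : M.E // x ∉ F}).map (Function.Embedding.subtype _) ∪ F =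
      Finset.univ := by
  ext x
  simp only [Finset.mem_univ, iff_true]
  by_cases h : x ∈ F
  · exact Finset.mem_union_right _ h
  · exact Finset.mem_union_left _ (Finset.mem_map.mpr ⟨⟨x, h⟩, Finset.mem_univ _, rfl⟩)

lemma res_rank (M : FinMatroid) (F : Finset M.E) :
    (M.restrictionAt F).rank = M.rank - M.rk F := by
  show M.rk _ - M.rk F = M.rank - M.rk F
  erw [res_map_union_univ]
  rfl

lemma res_loopless (hM : M.Loopless) (hF : M.IsFlat F) : (M.restrictionAt F).Loopless := by
  intro x
  show M.rk (Finset.map (Function.Embedding.subtype fun y => y ∉ F) {x} ∪ F) - M.rk F = 1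
  erw [Finset.map_singleton]
  have hsing : ({(Function.Embedding.subtype fun y => y ∉ F) x} : Finset M.E) ∪ F
      = insert ((Function.Embedding.subtype fun y => y ∉ F) x) F := by
    ext y; simp
  rw [hsing]
  have h1 := M.rk_insert_le F ((Function.Embedding.subtype _) x)
  have h2 := hF ((Function.Embedding.subtype fun y => y ∉ F) x) x.2
  have h3 : M.rk F ≤ M.rk (insert ((Function.Embedding.subtype fun y => y ∉ F) x) F) :=
    M.rk_mono (Finset.subset_insert _ _)
  omega

lemma res_isFlat_iff (S : Finset {x : M.E // x ∉ F}) :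
    (M.restrictionAt F).IsFlat S ↔
      M.IsFlat (S.map (Function.Embedding.subtype _) ∪ F) := by
  set e : {x : M.E // x ∉ F} ↪ M.E := (Function.Embedding.subtype fun x => x ∉ F) with he
  have hrkF : ∀ T : Finset {x : M.E // x ∉ F}, M.rk F ≤ M.rk (T.map e ∪ F) :=
    fun T => M.rk_mono Finset.subset_union_right
  constructor
  · intro h x hx
    rw [Finset.mem_union] at hx
    push_neg at hx
    obtain ⟨hxm, hxF⟩ := hx
    have hxS : (⟨x, hxF⟩ : {x : M.E // x ∉ F}) ∉ S := by
      intro hc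
      exact hxm (Finset.mem_map.mpr ⟨⟨x, hxF⟩, hc, rfl⟩)
    have h4 := h ⟨x, hxF⟩ hxS
    change M.rk ((insert ⟨x, hxF⟩ S).map e ∪ F) - M.rk F ≠ M.rk (S.map e ∪ F) - M.rk F at h4
    rw [Finset.map_insert, Finset.insert_union] at h4
    have hex : (e ⟨x, hxF⟩ : M.E) = x := rfl
    rw [hex] at h4
    have h5 := hrkF S
    have h6 := hrkF (insert ⟨x, hxF⟩ S)
    rw [Finset.map_insert, Finset.insert_union, hex] at h6
    have h7 : M.rk (S.map e ∪ F) ≤ M.rk (insert x (S.map e ∪ F)) :=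
      M.rk_mono (Finset.subset_insert _ _)
    omega
  · intro h x hx
    show M.rk ((insert x S).map e ∪ F) - M.rk F ≠ M.rk (S.map e ∪ F) - M.rk F
    erw [Finset.map_insert, Finset.insert_union]
    have hxn : (e x : M.E) ∉ S.map e ∪ F := by
      rw [Finset.mem_union]
      push_neg
      refine ⟨?_, x.2⟩
      intro hc
      obtain ⟨a, ha, hax⟩ := Finset.mem_map.mp hc
      exact hx ((e.injective hax) ▸ ha)
    have h4 := h (e x) hxn
    have h5 := hrkF S
    have h6 : M.rk (S.map e ∪ F) ≤ M.rk (insert (e x) (S.map e ∪ F)) :=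
      M.rk_mono (Finset.subset_insert _ _)
    omega

lemma res_psi_injective :
    Function.Injective (fun S : Finset {x : M.E // x ∉ F} =>
      S.map (Function.Embedding.subtype _) ∪ F) := by
  intro S T h
  have key : ∀ S : Finset {x : M.E // x ∉ F},
      (S.map (Function.Embedding.subtype fun x => x ∉ F) ∪ F) \ F
        = S.map (Function.Embedding.subtype _) := by
    intro S
    rw [Finset.union_sdiff_right, Finset.sdiff_eq_self_iff_disjoint]
    rw [Finset.disjoint_left]
    intro a ha
    obtain ⟨b, _, rfl⟩ := Finset.mem_map.mp ha
    exact b.2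
  have h2 : S.map (Function.Embedding.subtype fun x => x ∉ F)
      = T.map (Function.Embedding.subtype fun x => x ∉ F) := by
    rw [← key S, ← key T]
    simp only at h
    rw [h]
  exact Finset.map_injective _ h2

lemma res_flats_image :
    (M.restrictionAt F).flats.image
        (fun S => S.map (Function.Embedding.subtype _) ∪ F) =
      M.flats.filter (fun G => F ⊆ G) := by
  ext G
  simp only [Finset.mem_image, Finset.mem_filter, mem_flats]
  constructor
  · rintro ⟨S, hS, rfl⟩
    exact ⟨(res_isFlat_iff S).mp hS, Finset.subset_union_right⟩
  · rintro ⟨hGf, hGF⟩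
    refine ⟨G.subtype _, ?_, ?_⟩
    · rw [res_isFlat_iff, Finset.subtype_map, ← Finset.sdiff_eq_filter,
        Finset.sdiff_union_of_subset hGF]
      exact hGf
    · rw [Finset.subtype_map, ← Finset.sdiff_eq_filter, Finset.sdiff_union_of_subset hGF]

lemma res_sum {β : Type*} [AddCommMonoid β] (f : Finset M.E → β) :
    ∑ S ∈ (M.restrictionAt F).flats, f (S.map (Function.Embedding.subtype _) ∪ F) =
      ∑ G ∈ M.flats.filter (fun G => F ⊆ G), f G := by
  rw [← res_flats_image, Finset.sum_image]
  intro x _ y _ h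
  exact res_psi_injective h

lemma res_count (n : ℕ) :
    ((M.restrictionAt F).flats.filter (fun S => (M.restrictionAt F).rk S = n)).card =
      (M.flats.filter (fun G => F ⊆ G ∧ M.rk G = M.rk F + n)).card := by
  have h1 : ((M.restrictionAt F).flats.filter
        (fun S => (M.restrictionAt F).rk S = n)).card
      = ∑ S ∈ (M.restrictionAt F).flats,
          (if F ⊆ (S.map (Function.Embedding.subtype _) ∪ F) ∧
              M.rk (S.map (Function.Embedding.subtype _) ∪ F) = M.rk F + n then 1 else 0) := by
    rw [Finset.card_filter]
    refine Finset.sum_congr rfl fun S _ => ?_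
    have hle : M.rk F ≤ M.rk (S.map (Function.Embedding.subtype _) ∪ F) :=
      M.rk_mono Finset.subset_union_right
    have hres : (M.restrictionAt F).rk S
        = M.rk (S.map (Function.Embedding.subtype _) ∪ F) - M.rk F := rfl
    by_cases h : (M.restrictionAt F).rk S = n
    · rw [if_pos h, if_pos ⟨Finset.subset_union_right, by rw [hres] at h; omega⟩]
    · rw [if_neg h, if_neg ?_]
      rintro ⟨-, h2⟩
      exact h (by rw [hres]; omega)
  rw [h1, res_sum (fun G => if F ⊆ G ∧ M.rk G = M.rk F + n then 1 else 0),
    Finset.card_filter, Finset.sum_filter]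
  refine Finset.sum_congr rfl fun G _ => ?_
  by_cases h : F ⊆ G
  · by_cases h2 : M.rk G = M.rk F + n <;> simp [h, h2]
  · simp [h]

end FinMatroid
namespace FinMatroid

variable {M : FinMatroid}

lemma W_eq_zero {i j : ℤ} (h : i < 0 ∨ j < i ∨ (M.rank : ℤ) < j) : M.W i j = 0 := by
  rw [W, Finset.card_eq_zero, Finset.filter_eq_empty_iff]
  rintro ⟨E, G⟩ hEG
  rintro ⟨hsub, hi, hj⟩
  dsimp only at hsub hi hj
  have h1 : M.rk E ≤ M.rk G := M.rk_mono hsub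
  have h2 : M.rk G ≤ M.rank := M.rk_le_rank G
  omega

lemma W_by_snd (i j : ℤ) : M.W i j =
    ∑ G ∈ M.flats.filter (fun G => (M.rk G : ℤ) = j),
      (M.flats.filter (fun E => E ⊆ G ∧ (M.rk E : ℤ) = i)).card := by
  rw [W, Finset.card_filter, Finset.sum_product_right, Finset.sum_filter]
  refine Finset.sum_congr rfl fun G _ => ?_
  by_cases hj : (M.rk G : ℤ) = j
  · rw [if_pos hj, Finset.card_filter]
    refine Finset.sum_congr rfl fun E _ => ?_
    by_cases hc : E ⊆ G ∧ (M.rk E : ℤ) = i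
    · rw [if_pos ⟨hc.1, hc.2, hj⟩, if_pos hc]
    · rw [if_neg (fun hh => hc ⟨hh.1, hh.2.1⟩), if_neg hc]
  · rw [if_neg hj]
    refine Finset.sum_eq_zero fun E _ => ?_
    rw [if_neg (fun hh => hj hh.2.2)]

lemma W_by_fst (i j : ℤ) : M.W i j =
    ∑ E ∈ M.flats.filter (fun E => (M.rk E : ℤ) = i),
      (M.flats.filter (fun G => E ⊆ G ∧ (M.rk G : ℤ) = j)).card := by
  rw [W, Finset.card_filter, Finset.sum_product, Finset.sum_filter]
  refine Finset.sum_congr rfl fun E _ => ?_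
  by_cases hi : (M.rk E : ℤ) = i
  · rw [if_pos hi, Finset.card_filter]
    refine Finset.sum_congr rfl fun G _ => ?_
    by_cases hc : E ⊆ G ∧ (M.rk G : ℤ) = j
    · rw [if_pos ⟨hc.1, hi, hc.2⟩, if_pos hc]
    · rw [if_neg (fun hh => hc ⟨hh.1, hh.2.2⟩), if_neg hc]
  · rw [if_neg hi]
    refine Finset.sum_eq_zero fun G _ => ?_
    rw [if_neg (fun hh => hi hh.2.1)]

lemma filter_rank_zero (hM : M.Loopless) {G : Finset M.E} (hG : G ∈ M.flats) :
    M.flats.filter (fun E => E ⊆ G ∧ (M.rk E : ℤ) = 0) = {∅} := by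
  ext E
  simp only [Finset.mem_filter, Finset.mem_singleton]
  constructor
  · rintro ⟨hEf, -, hE⟩
    exact loopless_eq_empty hM (by omega)
  · rintro rfl
    exact ⟨empty_mem_flats hM, Finset.empty_subset G, by rw [M.rk_empty]; rfl⟩

lemma W_zero_left (hM : M.Loopless) (j : ℤ) :
    M.W 0 j = (M.flats.filter (fun F => (M.rk F : ℤ) = j)).card := by
  rw [W_by_snd]
  rw [Finset.sum_congr rfl fun G hG =>
    (by rw [filter_rank_zero hM (Finset.mem_filter.mp hG).1]; rfl :
      (M.flats.filter (fun E => E ⊆ G ∧ (M.rk E : ℤ) = 0)).card = 1)]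
  rw [Finset.sum_const, smul_eq_mul, mul_one]

lemma flats_filter_top : M.flats.filter (fun F => (M.rk F : ℤ) = (M.rank : ℤ)) =
    {Finset.univ} := by
  ext F
  simp only [Finset.mem_filter, Finset.mem_singleton, Nat.cast_inj]
  constructor
  · rintro ⟨hF, hr⟩
    exact flat_eq_univ (mem_flats.mp hF) (le_of_eq hr.symm)
  · rintro rfl
    exact ⟨univ_mem_flats M, rfl⟩

lemma w_eq (hM : M.Loopless) :
    M.w 0 2 = ∑ G ∈ M.flats.filter (fun G => M.rk G = 2), M.mu ∅ G := by
  rw [w, Finset.sum_filter, Finset.sum_product_right]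
  have step : ∀ G ∈ M.flats,
      (∑ E ∈ M.flats, if (M.rk E : ℤ) = 0 ∧ (M.rk G : ℤ) = 2 then M.mu E G else 0)
        = if M.rk G = 2 then M.mu ∅ G else 0 := by
    intro G _
    by_cases hj : M.rk G = 2
    · rw [if_pos hj]
      rw [Finset.sum_eq_single_of_mem ∅ (empty_mem_flats hM)]
      · rw [if_pos ⟨by rw [M.rk_empty]; rfl, by omega⟩]
      · intro E _ hne
        rw [if_neg]
        rintro ⟨h0, -⟩
        exact hne (loopless_eq_empty hM (by omega))
    · rw [if_neg hj]
      refine Finset.sum_eq_zero fun E _ => ?_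
      rw [if_neg (fun hh => hj (by omega))]
  rw [Finset.sum_congr rfl step, ← Finset.sum_filter]

end FinMatroid
namespace FinMatroid

lemma natDegree_P_le {P : FinMatroid → Polynomial ℤ} (hP : IsKLFamily P)
    (M : FinMatroid) (hM : M.Loopless) : (P M).natDegree ≤ M.rank := by
  rcases Nat.eq_zero_or_pos M.rank with h0 | hpos
  · rw [hP.1 M hM h0]
    simp
  · refine Polynomial.natDegree_le_iff_coeff_eq_zero.mpr fun N hN => ?_
    exact hP.2.1 M hM hpos N (by omega)

lemma eval_reflect (p : Polynomial ℚ) {d : ℕ} (hd : p.natDegree ≤ d) {q : ℚ} (hq : q ≠ 0) :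
    Polynomial.eval q (Polynomial.reflect d p) = q ^ d * Polynomial.eval q⁻¹ p := by
  have : Invertible q⁻¹ := invertibleOfNonzero (inv_ne_zero hq)
  have h := Polynomial.eval₂_reflect_mul_pow (RingHom.id ℚ) q⁻¹ d p hd
  rw [invOf_eq_inv, inv_inv] at h
  have hL : Polynomial.eval₂ (RingHom.id ℚ) q (Polynomial.reflect d p)
      = Polynomial.eval q (Polynomial.reflect d p) := rfl
  have hR : Polynomial.eval₂ (RingHom.id ℚ) q⁻¹ p = Polynomial.eval q⁻¹ p := rfl
  rw [hL, hR] at h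
  have hq' : (q⁻¹ : ℚ) ^ d ≠ 0 := pow_ne_zero _ (inv_ne_zero hq)
  field_simp at h ⊢
  rw [← h, mul_assoc, ← mul_pow, one_div_mul_cancel hq, one_pow, mul_one]

lemma kl_poly_id {P : FinMatroid → Polynomial ℤ} (hP : IsKLFamily P)
    (M : FinMatroid) (hM : M.Loopless) :
    Polynomial.reflect M.rank (P M) =
      ∑ F ∈ M.flats, (M.localization F).charPoly * P (M.restrictionAt F) := by
  have hinj := Polynomial.map_injective (algebraMap ℤ ℚ)
    (fun a b h => by exact_mod_cast h)
  apply hinj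
  apply Polynomial.eq_of_infinite_eval_eq
  have hsub : {x : ℚ | x ≠ 0} ⊆ {x : ℚ | Polynomial.eval x
      ((Polynomial.reflect M.rank (P M)).map (algebraMap ℤ ℚ)) = Polynomial.eval x
      ((∑ F ∈ M.flats, (M.localization F).charPoly * P (M.restrictionAt F)).map
        (algebraMap ℤ ℚ))} := by
    intro q hq
    simp only [Set.mem_setOf_eq] at hq ⊢
    have key : ∀ x : Polynomial ℤ, ∀ r : ℚ,
        Polynomial.eval r (x.map (algebraMap ℤ ℚ)) = Polynomial.aeval r x := by
      intro x r
      rw [Polynomial.aeval_def, Polynomial.eval_map]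
    rw [← Polynomial.reflect_map, eval_reflect _ ((Polynomial.natDegree_map_le).trans
      (natDegree_P_le hP M hM)) hq, key]
    rw [key]
    rw [hP.2.2 M hM q hq]
    rw [map_sum]
    refine Finset.sum_congr rfl fun F _ => ?_
    rw [map_mul]
  exact Set.infinite_of_finite_compl (by
    have : {x : ℚ | x ≠ 0}ᶜ = {0} := by ext x; simp
    rw [this]; exact Set.finite_singleton 0) |>.mono hsub

end FinMatroid
namespace FinMatroid

variable {P : FinMatroid → Polynomial ℤ}

lemma kl_coeff (hP : IsKLFamily P) (M : FinMatroid) (hM : M.Loopless) {k : ℕ}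
    (hk : k ≤ M.rank) :
    (P M).coeff k = ∑ F ∈ M.flats,
      ((M.localization F).charPoly * P (M.restrictionAt F)).coeff (M.rank - k) := by
  have h := congrArg (fun p => Polynomial.coeff p (M.rank - k)) (kl_poly_id hP M hM)
  rw [Polynomial.coeff_reflect, Polynomial.revAt_le (by omega : M.rank - k ≤ M.rank)] at h
  have hkk : M.rank - (M.rank - k) = k := by omega
  rw [hkk] at h
  rw [h, Polynomial.finset_sum_coeff]

lemma term_vanish (hP : IsKLFamily P) (M : FinMatroid) (hM : M.Loopless)
    {F : Finset M.E} (hFf : F ∈ M.flats) {n : ℕ}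
    (h1 : M.rk F < M.rank) (h2 : M.rank + M.rk F ≤ 2 * n) :
    ((M.localization F).charPoly * P (M.restrictionAt F)).coeff n = 0 := by
  rw [Polynomial.coeff_mul, Finset.Nat.sum_antidiagonal_eq_sum_range_succ_mk]
  refine Finset.sum_eq_zero fun a ha => ?_
  rw [Finset.mem_range] at ha
  rcases Nat.lt_or_ge (M.rk F) a with h | h
  · rw [charPoly_coeff_eq_zero _ (by rw [loc_rank]; omega), zero_mul]
  · rw [hP.2.1 (M.restrictionAt F) (res_loopless hM (mem_flats.mp hFf))
      (by rw [res_rank]; omega) (n - a) (by rw [res_rank]; omega), mul_zero]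

lemma coeff_P_zero (hP : IsKLFamily P) (M : FinMatroid) (hM : M.Loopless) :
    (P M).coeff 0 = 1 := by
  rcases Nat.eq_zero_or_pos M.rank with h0 | hpos
  · rw [hP.1 M hM h0]; simp
  · rw [kl_coeff hP M hM (Nat.zero_le _), Nat.sub_zero]
    rw [Finset.sum_eq_single_of_mem Finset.univ (univ_mem_flats M) ?side]
    case side =>
      intro F hFf hFne
      have hle : M.rk F ≤ M.rank := M.rk_le_rank F
      have hlt : M.rk F < M.rank := by
        rcases Nat.lt_or_ge (M.rk F) M.rank with h | h
        · exact h
        · exact absurd (flat_eq_univ (mem_flats.mp hFf) h) hFne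
      exact term_vanish hP M hM hFf hlt (by omega)
    have hres : P (M.restrictionAt Finset.univ) = 1 :=
      hP.1 _ (res_loopless hM (mem_flats.mp (univ_mem_flats M)))
        (by rw [res_rank, rk_univ]; omega)
    rw [hres, mul_one]
    have hlr : (M.localization Finset.univ).rank = M.rank := loc_rank M _
    rw [← hlr]
    exact charPoly_coeff_rank (loc_loopless hM _)

lemma flats_filter_top' (M : FinMatroid) :
    M.flats.filter (fun F => M.rk F = M.rank) = {Finset.univ} := by
  ext F
  simp only [Finset.mem_filter, Finset.mem_singleton]
  constructor
  · rintro ⟨hF, hr⟩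
    exact flat_eq_univ (mem_flats.mp hF) (le_of_eq hr.symm)
  · rintro rfl
    exact ⟨univ_mem_flats M, rfl⟩

lemma coeff_P_one_rank3 (hP : IsKLFamily P) (N : FinMatroid) (hN : N.Loopless)
    (h3 : N.rank = 3) :
    (P N).coeff 1 = ((N.flats.filter (fun G => N.rk G = 2)).card : ℤ)
      - ((N.flats.filter (fun G => N.rk G = 1)).card : ℤ) := by
  rw [kl_coeff hP N hN (by omega : 1 ≤ N.rank)]
  have hidx : N.rank - 1 = 2 := by omega
  rw [hidx]
  have step : ∀ F ∈ N.flats,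
      ((N.localization F).charPoly * P (N.restrictionAt F)).coeff 2
        = (if N.rk F = 3 then
            -((N.flats.filter (fun G => G ⊆ F ∧ N.rk G = 1)).card : ℤ) else 0)
          + (if N.rk F = 2 then 1 else 0) := by
    intro F hFf
    have hle : N.rk F ≤ N.rank := N.rk_le_rank F
    have hFflat := mem_flats.mp hFf
    rcases Nat.lt_or_ge (N.rk F) 2 with hsm | hbig
    · rw [if_neg (by omega), if_neg (by omega), add_zero]
      exact term_vanish hP N hN hFf (by omega) (by omega)
    rcases Nat.eq_or_lt_of_le hbig with h2f | h3f
    · -- rk F = 2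
      rw [if_neg (by omega), if_pos h2f.symm, zero_add]
      rw [Polynomial.coeff_mul, Finset.Nat.sum_antidiagonal_eq_sum_range_succ_mk]
      rw [Finset.sum_eq_single_of_mem 2 (Finset.mem_range.mpr (by omega)) ?other]
      case other =>
        intro a ha hane
        rw [Finset.mem_range] at ha
        rw [hP.2.1 (N.restrictionAt F) (res_loopless hN hFflat)
          (by rw [res_rank]; omega) (2 - a) (by rw [res_rank]; omega), mul_zero]
      have hq0 := coeff_P_zero hP (N.restrictionAt F) (res_loopless hN hFflat)
      rw [Nat.sub_self, hq0, mul_one]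
      have hlr : (N.localization F).rank = 2 := by rw [loc_rank]; omega
      rw [← hlr]
      exact charPoly_coeff_rank (loc_loopless hN _)
    · -- rk F = 3
      have h3f' : N.rk F = 3 := by omega
      rw [if_pos h3f', if_neg (by omega), add_zero]
      have hres : P (N.restrictionAt F) = 1 :=
        hP.1 _ (res_loopless hN hFflat) (by rw [res_rank]; omega)
      rw [hres, mul_one]
      have hlr : (2 : ℕ) = (N.localization F).rank - 1 := by rw [loc_rank]; omega
      rw [hlr, charPoly_coeff_pred (loc_loopless hN _) (by rw [loc_rank]; omega)]
      rw [loc_count hFflat 1]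
  rw [Finset.sum_congr rfl step, Finset.sum_add_distrib]
  have hA : ∑ F ∈ N.flats, (if N.rk F = 3 then
      -((N.flats.filter (fun G => G ⊆ F ∧ N.rk G = 1)).card : ℤ) else 0)
      = -((N.flats.filter (fun G => N.rk G = 1)).card : ℤ) := by
    rw [← Finset.sum_filter]
    have hf3 : N.flats.filter (fun F => N.rk F = 3) = {Finset.univ} := by
      rw [← flats_filter_top' N]
      exact Finset.filter_congr fun F _ => by rw [h3]
    rw [hf3, Finset.sum_singleton]
    have heq : N.flats.filter (fun G => G ⊆ Finset.univ ∧ N.rk G = 1)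
        = N.flats.filter (fun G => N.rk G = 1) :=
      Finset.filter_congr fun G _ =>
        ⟨fun h => h.2, fun h => ⟨Finset.subset_univ G, h⟩⟩
    rw [heq]
  have hB : ∑ F ∈ N.flats, (if N.rk F = 2 then (1 : ℤ) else 0)
      = ((N.flats.filter (fun G => N.rk G = 2)).card : ℤ) := by
    rw [← Finset.sum_filter, Finset.sum_const, nsmul_eq_mul, mul_one]
  rw [hA, hB]
  ring

end FinMatroid
namespace FinMatroid

variable {P : FinMatroid → Polynomial ℤ}

lemma w_eq_zero (M : FinMatroid) (h : (M.rank : ℤ) < 2) : M.w 0 2 = 0 := by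
  rw [w]
  have hempty : (M.flats ×ˢ M.flats).filter
      (fun p => (M.rk p.1 : ℤ) = 0 ∧ (M.rk p.2 : ℤ) = 2) = ∅ := by
    rw [Finset.filter_eq_empty_iff]
    rintro ⟨E, G⟩ hEG ⟨h0, h2⟩
    dsimp only at h0 h2
    have := M.rk_le_rank G
    omega
  rw [hempty, Finset.sum_empty]

lemma term_L0 (hP : IsKLFamily P) (M : FinMatroid) (hM : M.Loopless)
    (hge : 2 ≤ M.rank) :
    ((M.localization Finset.univ).charPoly * P (M.restrictionAt Finset.univ)).coeff
        (M.rank - 2) = ∑ G ∈ M.flats.filter (fun G => M.rk G = 2), M.mu ∅ G := by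
  have huf := mem_flats.mp (univ_mem_flats M)
  have hres : P (M.restrictionAt Finset.univ) = 1 :=
    hP.1 _ (res_loopless hM huf) (by rw [res_rank, rk_univ]; omega)
  rw [hres, mul_one]
  rw [charPoly_coeff_of_le _ (by rw [loc_rank, rk_univ]; omega)]
  have hfc : (M.localization Finset.univ).flats.filter
        (fun G => (M.localization Finset.univ).rk G
          = (M.localization Finset.univ).rank - (M.rank - 2))
      = (M.localization Finset.univ).flats.filter
        (fun G => (M.localization Finset.univ).rk G = 2) := by
    refine Finset.filter_congr fun G _ => ?_
    rw [loc_rank, rk_univ]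
    constructor <;> intro h <;> omega
  rw [hfc]
  have step1 : ∑ G ∈ (M.localization Finset.univ).flats.filter
        (fun G => (M.localization Finset.univ).rk G = 2),
        (M.localization Finset.univ).mu ∅ G
      = ∑ S ∈ (M.localization Finset.univ).flats,
        (if M.rk (S.map (Function.Embedding.subtype _)) = 2 then
          M.mu ∅ (S.map (Function.Embedding.subtype _)) else 0) := by
    rw [Finset.sum_filter]
    refine Finset.sum_congr rfl fun S _ => ?_
    have hmu : (M.localization Finset.univ).mu ∅ S
        = M.mu ∅ (S.map (Function.Embedding.subtype _)) := by
      have := loc_mu huf S ∅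
      rwa [Finset.map_empty] at this
    have hrk : (M.localization Finset.univ).rk S
        = M.rk (S.map (Function.Embedding.subtype _)) := rfl
    rw [hmu, hrk]
  rw [step1, loc_sum huf (fun G => if M.rk G = 2 then M.mu ∅ G else 0)]
  rw [Finset.filter_true_of_mem (fun G _ => Finset.subset_univ G), ← Finset.sum_filter]

theorem kl_quadratic_coeff' (hP : FinMatroid.IsKLFamily P) (M : FinMatroid)
    (hM : M.Loopless) :
    (P M).coeff 2 =
      M.w 0 2 - (M.W 1 ((M.rank : ℤ) - 1) : ℤ) + (M.W 0 ((M.rank : ℤ) - 2) : ℤ)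
        - (M.W ((M.rank : ℤ) - 3) ((M.rank : ℤ) - 2) : ℤ)
        + (M.W ((M.rank : ℤ) - 3) ((M.rank : ℤ) - 1) : ℤ) := by
  rcases Nat.lt_or_ge M.rank 2 with hlt | hge
  · have hc2 : (P M).coeff 2 = 0 := by
      rcases Nat.eq_zero_or_pos M.rank with h0 | hpos
      · rw [hP.1 M hM h0]
        rw [Polynomial.coeff_one]
        norm_num
      · exact hP.2.1 M hM hpos 2 (by omega)
    rw [hc2, w_eq_zero M (by exact_mod_cast hlt),
      W_eq_zero (by right; left; omega), W_eq_zero (by right; left; omega),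
      W_eq_zero (by left; omega), W_eq_zero (by left; omega)]
    norm_num
  · rw [kl_coeff hP M hM (by omega : 2 ≤ M.rank)]
    have step : ∀ F ∈ M.flats,
        ((M.localization F).charPoly * P (M.restrictionAt F)).coeff (M.rank - 2)
        = (if (M.rk F : ℤ) = (M.rank : ℤ) then
              ∑ G ∈ M.flats.filter (fun G => M.rk G = 2), M.mu ∅ G else 0)
          + (if (M.rk F : ℤ) = (M.rank : ℤ) - 1 then
              -((M.flats.filter (fun E => E ⊆ F ∧ (M.rk E : ℤ) = 1)).card : ℤ) else 0)
          + (if (M.rk F : ℤ) = (M.rank : ℤ) - 2 then 1 else 0)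
          + (if (M.rk F : ℤ) = (M.rank : ℤ) - 3 then
              ((M.flats.filter (fun G => F ⊆ G ∧ (M.rk G : ℤ) = (M.rank : ℤ) - 1)).card : ℤ)
              - ((M.flats.filter (fun G => F ⊆ G ∧ (M.rk G : ℤ) = (M.rank : ℤ) - 2)).card : ℤ)
            else 0) := by
      intro F hFf
      have hFflat := mem_flats.mp hFf
      have hle : M.rk F ≤ M.rank := M.rk_le_rank F
      by_cases hA : M.rk F = M.rank
      · rw [if_pos (by omega), if_neg (by omega), if_neg (by omega), if_neg (by omega)]
        have hFu : F = Finset.univ := flat_eq_univ hFflat (le_of_eq hA.symm)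
        subst hFu
        rw [term_L0 hP M hM hge]
        ring
      by_cases hB : M.rk F = M.rank - 1
      · rw [if_neg (by omega), if_pos (by omega), if_neg (by omega), if_neg (by omega)]
        rw [Polynomial.coeff_mul, Finset.Nat.sum_antidiagonal_eq_sum_range_succ_mk]
        rw [Finset.sum_eq_single_of_mem (M.rank - 2)
          (Finset.mem_range.mpr (by omega)) ?otherB]
        case otherB =>
          intro a ha hane
          rw [Finset.mem_range] at ha
          rw [hP.2.1 (M.restrictionAt F) (res_loopless hM hFflat)
            (by rw [res_rank]; omega) (M.rank - 2 - a) (by rw [res_rank]; omega), mul_zero]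
        rw [Nat.sub_self, coeff_P_zero hP _ (res_loopless hM hFflat), mul_one]
        have hidx : M.rank - 2 = (M.localization F).rank - 1 := by rw [loc_rank]; omega
        rw [hidx, charPoly_coeff_pred (loc_loopless hM _) (by rw [loc_rank]; omega)]
        rw [loc_count hFflat 1]
        have heq : M.flats.filter (fun G => G ⊆ F ∧ M.rk G = 1)
            = M.flats.filter (fun E => E ⊆ F ∧ (M.rk E : ℤ) = 1) :=
          Finset.filter_congr fun G _ => by
            constructor
            · rintro ⟨h1, h2⟩; exact ⟨h1, by omega⟩
            · rintro ⟨h1, h2⟩; exact ⟨h1, by omega⟩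
        rw [heq]
        ring
      by_cases hC : M.rk F = M.rank - 2
      · rw [if_neg (by omega), if_neg (by omega), if_pos (by omega), if_neg (by omega)]
        rw [Polynomial.coeff_mul, Finset.Nat.sum_antidiagonal_eq_sum_range_succ_mk]
        rw [Finset.sum_eq_single_of_mem (M.rank - 2)
          (Finset.mem_range.mpr (by omega)) ?otherC]
        case otherC =>
          intro a ha hane
          rw [Finset.mem_range] at ha
          rw [hP.2.1 (M.restrictionAt F) (res_loopless hM hFflat)
            (by rw [res_rank]; omega) (M.rank - 2 - a) (by rw [res_rank]; omega), mul_zero]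
        rw [Nat.sub_self, coeff_P_zero hP _ (res_loopless hM hFflat), mul_one]
        have hidx : M.rank - 2 = (M.localization F).rank := by rw [loc_rank]; omega
        rw [hidx, charPoly_coeff_rank (loc_loopless hM _)]
        ring
      by_cases hD : M.rk F = M.rank - 3
      · have h3 : 3 ≤ M.rank := by omega
        rw [if_neg (by omega), if_neg (by omega), if_neg (by omega), if_pos (by omega)]
        rw [Polynomial.coeff_mul, Finset.Nat.sum_antidiagonal_eq_sum_range_succ_mk]
        rw [Finset.sum_eq_single_of_mem (M.rank - 3)
          (Finset.mem_range.mpr (by omega)) ?otherD]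
        case otherD =>
          intro a ha hane
          rw [Finset.mem_range] at ha
          rcases Nat.lt_or_ge (M.rank - 3) a with h | h
          · rw [charPoly_coeff_eq_zero _ (by rw [loc_rank]; omega), zero_mul]
          · rw [hP.2.1 (M.restrictionAt F) (res_loopless hM hFflat)
              (by rw [res_rank]; omega) (M.rank - 2 - a) (by rw [res_rank]; omega), mul_zero]
        have hidx : M.rank - 3 = (M.localization F).rank := by rw [loc_rank]; omega
        rw [hidx, charPoly_coeff_rank (loc_loopless hM _), one_mul]
        have hidx2 : M.rank - 2 - (M.localization F).rank = 1 := by rw [loc_rank]; omega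
        rw [hidx2]
        rw [coeff_P_one_rank3 hP (M.restrictionAt F) (res_loopless hM hFflat)
          (by rw [res_rank]; omega)]
        rw [res_count 2, res_count 1]
        have heq2 : M.flats.filter (fun G => F ⊆ G ∧ M.rk G = M.rk F + 2)
            = M.flats.filter (fun G => F ⊆ G ∧ (M.rk G : ℤ) = (M.rank : ℤ) - 1) :=
          Finset.filter_congr fun G _ => by
            constructor
            · rintro ⟨h1, h2⟩; exact ⟨h1, by omega⟩
            · rintro ⟨h1, h2⟩; exact ⟨h1, by omega⟩
        have heq1 : M.flats.filter (fun G => F ⊆ G ∧ M.rk G = M.rk F + 1)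
            = M.flats.filter (fun G => F ⊆ G ∧ (M.rk G : ℤ) = (M.rank : ℤ) - 2) :=
          Finset.filter_congr fun G _ => by
            constructor
            · rintro ⟨h1, h2⟩; exact ⟨h1, by omega⟩
            · rintro ⟨h1, h2⟩; exact ⟨h1, by omega⟩
        rw [heq2, heq1]
        ring
      · rw [if_neg (by omega), if_neg (by omega), if_neg (by omega), if_neg (by omega)]
        have hE : M.rk F + 4 ≤ M.rank := by omega
        rw [term_vanish hP M hM hFf (by omega) (by omega)]
        ring
    rw [Finset.sum_congr rfl step]
    rw [Finset.sum_add_distrib, Finset.sum_add_distrib, Finset.sum_add_distrib]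
    have hS1 : ∑ F ∈ M.flats, (if (M.rk F : ℤ) = (M.rank : ℤ) then
        ∑ G ∈ M.flats.filter (fun G => M.rk G = 2), M.mu ∅ G else 0)
        = M.w 0 2 := by
      rw [← Finset.sum_filter, flats_filter_top, Finset.sum_singleton, w_eq hM]
    have hS2 : ∑ F ∈ M.flats, (if (M.rk F : ℤ) = (M.rank : ℤ) - 1 then
        -((M.flats.filter (fun E => E ⊆ F ∧ (M.rk E : ℤ) = 1)).card : ℤ) else 0)
        = -(M.W 1 ((M.rank : ℤ) - 1) : ℤ) := by
      rw [← Finset.sum_filter, W_by_snd]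
      push_cast
      rw [Finset.sum_neg_distrib]
    have hS3 : ∑ F ∈ M.flats, (if (M.rk F : ℤ) = (M.rank : ℤ) - 2 then (1 : ℤ) else 0)
        = (M.W 0 ((M.rank : ℤ) - 2) : ℤ) := by
      rw [← Finset.sum_filter, W_zero_left hM, Finset.sum_const, nsmul_eq_mul, mul_one]
    have hS4 : ∑ F ∈ M.flats, (if (M.rk F : ℤ) = (M.rank : ℤ) - 3 then
        ((M.flats.filter (fun G => F ⊆ G ∧ (M.rk G : ℤ) = (M.rank : ℤ) - 1)).card : ℤ)
        - ((M.flats.filter (fun G => F ⊆ G ∧ (M.rk G : ℤ) = (M.rank : ℤ) - 2)).card : ℤ)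
          else 0)
        = (M.W ((M.rank : ℤ) - 3) ((M.rank : ℤ) - 1) : ℤ)
          - (M.W ((M.rank : ℤ) - 3) ((M.rank : ℤ) - 2) : ℤ) := by
      rw [← Finset.sum_filter, Finset.sum_sub_distrib, W_by_fst ((M.rank : ℤ) - 3),
        W_by_fst ((M.rank : ℤ) - 3)]
      push_cast
      ring
    rw [hS1, hS2, hS3, hS4]
    ring

end FinMatroid
/-- The quadratic coefficient of the Kazhdan–Lusztig polynomial of a
loopless matroid `M` of rank `d` equals
`w_{0,2} - W_{1,d-1} + W_{0,d-2} - W_{d-3,d-2} + W_{d-3,d-1}`. -/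
theorem kl_quadratic_coeff (P : FinMatroid → Polynomial ℤ)
    (hP : FinMatroid.IsKLFamily P) (M : FinMatroid) (hM : M.Loopless) :
    (P M).coeff 2 =
      M.w 0 2 - (M.W 1 ((M.rank : ℤ) - 1) : ℤ) + (M.W 0 ((M.rank : ℤ) - 2) : ℤ)
        - (M.W ((M.rank : ℤ) - 3) ((M.rank : ℤ) - 2) : ℤ)
        + (M.W ((M.rank : ℤ) - 3) ((M.rank : ℤ) - 1) : ℤ) :=
  FinMatroid.kl_quadratic_coeff' hP M hM
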